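/- Let H be a real Hilbert space and M ≥ 0. Let ρ be a finite Borel measure on H with ρ({0}) = 0. Let u, v ∈ H satisfy ‖u‖ ≤ M and ‖v‖ ≤ M, and suppose that for ρ-almost every ξ one has ⟨ξ, u⟩ ≥ 0 and ⟨ξ, v⟩ ≥ 0. Define J(w) := ∫_H (e^{−⟨ξ,w⟩} − 1 + ⟨χ(ξ), w⟩)·‖ξ‖^{−2} dρ(ξ) for w ∈ {u, v}. Then both integrals are absolutely convergent and |J(u) − J(v)| ≤ (M + 1)·ρ(H)·‖u − v‖. -/

import Mathlib

/-!
Write `a = ⟪ξ, u⟫`, `b = ⟪ξ, v⟫` and `c = ‖ξ‖`, so that `|a - b| ≤ c ‖u - v‖` and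
`a, b ≤ c M`. On `a, b ≥ 0` the map `t ↦ e^{-t}` is `1`-Lipschitz and `t ↦ e^{-t} - 1 + t` has
derivative `1 - e^{-t} ∈ [0, t]`. For `c ≤ 1` the difference of the integrands is therefore at most
`(c M)(c ‖u - v‖) / c² = M ‖u - v‖`, and for `c > 1` at most `c ‖u - v‖ / c² ≤ ‖u - v‖`.
Integrating this pointwise bound against the finite measure `ρ` gives the estimate, and the
case `v = 0` gives integrability.
-/

open MeasureTheory Real
open scoped RealInnerProductSpace

lemma exp_neg_sub_exp_neg_le_sub {a b : ℝ} (ha : 0 ≤ a) (hab : a ≤ b) :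
    exp (-a) - exp (-b) ≤ b - a := by
  have hea : exp (-a) ≤ 1 := exp_le_one_iff.mpr (by linarith)
  have h := add_one_le_exp (a - b)
  have hsplit : exp (-b) = exp (-a) * exp (a - b) := by rw [← exp_add]; ring_nf
  nlinarith [exp_pos (-a)]

lemma abs_exp_neg_sub_exp_neg_le {a b : ℝ} (ha : 0 ≤ a) (hb : 0 ≤ b) :
    |exp (-a) - exp (-b)| ≤ |a - b| := by
  wlog hab : a ≤ b generalizing a b
  · rw [abs_sub_comm, abs_sub_comm a]
    exact this hb ha (le_of_not_ge hab)
  rw [abs_sub_comm a, abs_of_nonneg (sub_nonneg.mpr hab),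
    abs_of_nonneg (sub_nonneg.mpr (exp_le_exp.mpr (neg_le_neg hab)))]
  exact exp_neg_sub_exp_neg_le_sub ha hab

lemma abs_exp_neg_sub_one_add_sub_le {a b : ℝ} (ha : 0 ≤ a) (hb : 0 ≤ b) :
    |(exp (-a) - 1 + a) - (exp (-b) - 1 + b)| ≤ max a b * |a - b| := by
  wlog hab : a ≤ b generalizing a b
  · rw [abs_sub_comm, abs_sub_comm a, max_comm]
    exact this hb ha (le_of_not_ge hab)
  rw [max_eq_right hab, abs_sub_comm, abs_sub_comm a, abs_of_nonneg (sub_nonneg.mpr hab)]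
  have hlower := exp_neg_sub_exp_neg_le_sub ha hab
  have hupper : exp (-b) * (b - a) ≤ exp (-a) - exp (-b) := by
    have h := add_one_le_exp (b - a)
    have hsplit : exp (-a) = exp (-b) * exp (b - a) := by rw [← exp_add]; ring_nf
    nlinarith [exp_pos (-b)]
  have hb1 : 1 - exp (-b) ≤ b := by linarith [add_one_le_exp (-b)]
  rw [abs_le]
  constructor <;> nlinarith

noncomputable def jumpKernel (c t : ℝ) : ℝ :=
  (exp (-t) - 1 + if c ≤ 1 then t else 0) * c ^ (-2 : ℤ)

lemma abs_jumpKernel_sub_le {a b c M r : ℝ} (ha : 0 ≤ a) (hb : 0 ≤ b) (hc : 0 < c)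
    (hab : |a - b| ≤ c * r) (hmax : max a b ≤ c * M) :
    |jumpKernel c a - jumpKernel c b| ≤ (M + 1) * r := by
  have hr : 0 ≤ r := nonneg_of_mul_nonneg_right ((abs_nonneg _).trans hab) hc
  have hM : 0 ≤ M := nonneg_of_mul_nonneg_right (ha.trans ((le_max_left a b).trans hmax)) hc
  have hc2 : c ^ (-2 : ℤ) = (c ^ 2)⁻¹ := by rw [zpow_neg, zpow_ofNat]
  rw [jumpKernel, jumpKernel, ← sub_mul, abs_mul, hc2,
    abs_of_pos (a := (c ^ 2)⁻¹) (by positivity)]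
  by_cases hc1 : c ≤ 1
  · simp only [hc1, if_true]
    calc |(exp (-a) - 1 + a) - (exp (-b) - 1 + b)| * (c ^ 2)⁻¹
        ≤ (c * M) * (c * r) * (c ^ 2)⁻¹ := by
          gcongr
          exact (abs_exp_neg_sub_one_add_sub_le ha hb).trans
            (mul_le_mul hmax hab (abs_nonneg _) (by positivity))
      _ = M * r := by field_simp
      _ ≤ (M + 1) * r := by nlinarith
  · simp only [hc1, if_false, add_zero, sub_sub_sub_cancel_right]
    calc |exp (-a) - exp (-b)| * (c ^ 2)⁻¹
        ≤ (c * r) * (c ^ 2)⁻¹ := by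
          gcongr
          exact (abs_exp_neg_sub_exp_neg_le ha hb).trans hab
      _ = r / c := by field_simp
      _ ≤ (M + 1) * r := by
          rw [div_le_iff₀ hc]
          nlinarith [mul_nonneg (mul_nonneg hM hr) hc.le,
            mul_nonneg (sub_nonneg.mpr (le_of_not_ge hc1)) hr]

section JumpIntegrand

variable {H : Type*} [NormedAddCommGroup H] [InnerProductSpace ℝ H]

noncomputable def jumpIntegrand (w ξ : H) : ℝ :=
  (exp (-⟪ξ, w⟫) - 1 + ⟪(if ‖ξ‖ ≤ 1 then ξ else 0), w⟫) * ‖ξ‖ ^ (-2 : ℤ)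

@[simp]
lemma jumpIntegrand_zero_left (ξ : H) : jumpIntegrand 0 ξ = 0 := by
  simp [jumpIntegrand]

lemma jumpIntegrand_eq_jumpKernel (w ξ : H) :
    jumpIntegrand w ξ = jumpKernel ‖ξ‖ ⟪ξ, w⟫ := by
  rw [jumpIntegrand, jumpKernel]
  split_ifs <;> simp

lemma abs_jumpIntegrand_sub_le {M : ℝ} {u v ξ : H} (hu : ‖u‖ ≤ M) (hv : ‖v‖ ≤ M)
    (hξu : 0 ≤ ⟪ξ, u⟫) (hξv : 0 ≤ ⟪ξ, v⟫) :
    |jumpIntegrand u ξ - jumpIntegrand v ξ| ≤ (M + 1) * ‖u - v‖ := by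
  rcases eq_or_ne ξ 0 with rfl | hξ
  · -- both integrands vanish at `ξ = 0`, whatever the junk value of `‖0‖ ^ (-2)`
    simpa [jumpIntegrand] using
      mul_nonneg (by linarith [(norm_nonneg u).trans hu]) (norm_nonneg (u - v))
  rw [jumpIntegrand_eq_jumpKernel, jumpIntegrand_eq_jumpKernel]
  refine abs_jumpKernel_sub_le hξu hξv (norm_pos_iff.mpr hξ) ?_ ?_
  · rw [← inner_sub_right]
    exact abs_real_inner_le_norm ξ (u - v)
  · exact max_le ((real_inner_le_norm ξ u).trans (by gcongr))
      ((real_inner_le_norm ξ v).trans (by gcongr))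

variable [MeasurableSpace H] [BorelSpace H]

lemma measurable_jumpIntegrand (w : H) : Measurable (jumpIntegrand w) := by
  have hball : MeasurableSet {ξ : H | ‖ξ‖ ≤ 1} :=
    measurableSet_le measurable_norm measurable_const
  have hχ : Measurable fun ξ : H => if ‖ξ‖ ≤ 1 then ξ else 0 :=
    measurable_id.ite hball measurable_const
  unfold jumpIntegrand
  fun_prop

lemma integrable_jumpIntegrand {M : ℝ} {ρ : Measure H} [IsFiniteMeasure ρ] {w : H}
    (hw : ‖w‖ ≤ M) (hρw : ∀ᵐ ξ ∂ρ, 0 ≤ ⟪ξ, w⟫) : Integrable (jumpIntegrand w) ρ := by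
  have h0 : ‖(0 : H)‖ ≤ M := by simpa using (norm_nonneg w).trans hw
  refine .mono' (integrable_const ((M + 1) * ‖w‖))
    (measurable_jumpIntegrand w).aestronglyMeasurable ?_
  filter_upwards [hρw] with ξ hξ
  simpa using abs_jumpIntegrand_sub_le hw h0 hξ (inner_zero_right ξ).ge

end JumpIntegrand

theorem stmt_1_general {H : Type*} [NormedAddCommGroup H] [InnerProductSpace ℝ H]
    [MeasurableSpace H] [BorelSpace H]
    (M : ℝ)
    (ρ : Measure H) [IsFiniteMeasure ρ]
    (u v : H) (hu : ‖u‖ ≤ M) (hv : ‖v‖ ≤ M)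
    (hpu : ∀ᵐ ξ ∂ρ, 0 ≤ ⟪ξ, u⟫) (hpv : ∀ᵐ ξ ∂ρ, 0 ≤ ⟪ξ, v⟫) :
    Integrable (fun ξ : H =>
        (Real.exp (-⟪ξ, u⟫) - 1 + ⟪(if ‖ξ‖ ≤ 1 then ξ else 0), u⟫) * ‖ξ‖ ^ (-2 : ℤ)) ρ ∧
    Integrable (fun ξ : H =>
        (Real.exp (-⟪ξ, v⟫) - 1 + ⟪(if ‖ξ‖ ≤ 1 then ξ else 0), v⟫) * ‖ξ‖ ^ (-2 : ℤ)) ρ ∧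
    |(∫ ξ, (Real.exp (-⟪ξ, u⟫) - 1 + ⟪(if ‖ξ‖ ≤ 1 then ξ else 0), u⟫) * ‖ξ‖ ^ (-2 : ℤ) ∂ρ)
      - (∫ ξ, (Real.exp (-⟪ξ, v⟫) - 1 + ⟪(if ‖ξ‖ ≤ 1 then ξ else 0), v⟫) * ‖ξ‖ ^ (-2 : ℤ) ∂ρ)|
      ≤ (M + 1) * (ρ Set.univ).toReal * ‖u - v‖ := by
  have hiu : Integrable (jumpIntegrand u) ρ := integrable_jumpIntegrand hu hpu
  have hiv : Integrable (jumpIntegrand v) ρ := integrable_jumpIntegrand hv hpv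
  refine ⟨hiu, hiv, ?_⟩
  have hbound : ∀ᵐ ξ ∂ρ, ‖jumpIntegrand u ξ - jumpIntegrand v ξ‖ ≤ (M + 1) * ‖u - v‖ := by
    filter_upwards [hpu, hpv] with ξ hξu hξv
    exact abs_jumpIntegrand_sub_le hu hv hξu hξv
  calc |∫ ξ, jumpIntegrand u ξ ∂ρ - ∫ ξ, jumpIntegrand v ξ ∂ρ|
      = ‖∫ ξ, (jumpIntegrand u ξ - jumpIntegrand v ξ) ∂ρ‖ := by rw [integral_sub hiu hiv]; rfl
    _ ≤ (M + 1) * ‖u - v‖ * (ρ Set.univ).toReal := norm_integral_le_of_norm_le_const hbound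
    _ = (M + 1) * (ρ Set.univ).toReal * ‖u - v‖ := by ring

/-- Scalarized Lipschitz estimate for the nonlinear jump part of the function `R` of the
generalized Riccati equations: with `χ(ξ) = ξ · 1_{‖ξ‖ ≤ 1}(ξ)` and
`J(w) = ∫ (e^{−⟪ξ,w⟫} − 1 + ⟪χ(ξ), w⟫)·‖ξ‖⁻² dρ(ξ)` for a finite measure `ρ` with
`ρ({0}) = 0`, both integrals converge absolutely and
`|J(u) − J(v)| ≤ (M + 1)·ρ(H)·‖u − v‖`. -/
theorem stmt_1 {H : Type*} [NormedAddCommGroup H] [InnerProductSpace ℝ H] [CompleteSpace H]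
    [MeasurableSpace H] [BorelSpace H]
    (M : ℝ) (hM : 0 ≤ M)
    (ρ : Measure H) [IsFiniteMeasure ρ] (hρ0 : ρ {0} = 0)
    (u v : H) (hu : ‖u‖ ≤ M) (hv : ‖v‖ ≤ M)
    (hpu : ∀ᵐ ξ ∂ρ, 0 ≤ ⟪ξ, u⟫) (hpv : ∀ᵐ ξ ∂ρ, 0 ≤ ⟪ξ, v⟫) :
    Integrable (fun ξ : H =>
        (Real.exp (-⟪ξ, u⟫) - 1 + ⟪(if ‖ξ‖ ≤ 1 then ξ else 0), u⟫) * ‖ξ‖ ^ (-2 : ℤ)) ρ ∧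
    Integrable (fun ξ : H =>
        (Real.exp (-⟪ξ, v⟫) - 1 + ⟪(if ‖ξ‖ ≤ 1 then ξ else 0), v⟫) * ‖ξ‖ ^ (-2 : ℤ)) ρ ∧
    |(∫ ξ, (Real.exp (-⟪ξ, u⟫) - 1 + ⟪(if ‖ξ‖ ≤ 1 then ξ else 0), u⟫) * ‖ξ‖ ^ (-2 : ℤ) ∂ρ)
      - (∫ ξ, (Real.exp (-⟪ξ, v⟫) - 1 + ⟪(if ‖ξ‖ ≤ 1 then ξ else 0), v⟫) * ‖ξ‖ ^ (-2 : ℤ) ∂ρ)|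
      ≤ (M + 1) * (ρ Set.univ).toReal * ‖u - v‖ :=
  stmt_1_general M ρ u v hu hv hpu hpv
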